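/- Suppose Cloud receives the transformed constraint data G̃ = G𝐑 and ẽ = W + Ox₀ − G𝐫, where G = col(I_{Nm}, −I_{Nm}, 𝒢, −𝒢), W's first block of Nm rows equals 𝟙_N ⊗ u_max, and the first Nm rows of O are zero. Then: (a) the first Nm rows of G̃ reveal 𝐑 exactly; and (b) from the first Nm rows ẽ₁ = 𝟙_N ⊗ u_max − 𝐫 of ẽ, multiplying by (L ⊗ I_m) with L = I_N − (1/N)𝟙_N𝟙_Nᵀ yields (L ⊗ I_m)𝐫 = −(L ⊗ I_m)ẽ₁, so Cloud recovers (L ⊗ I_m)𝐫. -/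

import Mathlib

open Matrix
open scoped Kronecker

/-! The first block row of `G` is the identity, so the first block row of `G * R` is `R`.
The centering matrix `L` annihilates `𝟙`, so by the mixed-product rule
`(L ⊗ I)(𝟙 ⊗ u) = (L 𝟙) ⊗ u = 0`, and `e₁ = 𝟙 ⊗ u_max - r` gives the second claim. -/

namespace Matrix

variable {l l' m m' R : Type*} [Fintype l'] [Fintype m'] [CommSemiring R]

theorem kronecker_mulVec_mul (A : Matrix l l' R) (B : Matrix m m' R) (v : l' → R) (w : m' → R) :
    (A ⊗ₖ B) *ᵥ (fun i => v i.1 * w i.2) = fun i => (A *ᵥ v) i.1 * (B *ᵥ w) i.2 := by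
  funext i
  simp only [mulVec, dotProduct, kroneckerMap_apply, Fintype.sum_prod_type, Finset.sum_mul_sum]
  exact Finset.sum_congr rfl fun _ _ => Finset.sum_congr rfl fun _ _ => by ring

theorem kronecker_mulVec_eq_zero_of_mulVec_one_eq_zero {A : Matrix l l' R} (hA : A *ᵥ 1 = 0)
    (B : Matrix m m' R) (w : m' → R) : (A ⊗ₖ B) *ᵥ (fun i => w i.2) = 0 := by
  funext i
  simpa [hA] using congrFun (kronecker_mulVec_mul A B 1 w) i

theorem centering_mulVec_one {ι K : Type*} [Fintype ι] [DecidableEq ι] [Field K] [CharZero K] :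
    (1 - (Fintype.card ι : K)⁻¹ • of fun _ _ : ι => (1 : K)) *ᵥ 1 = 0 := by
  funext i
  have : Nonempty ι := ⟨i⟩
  simp [mulVec, dotProduct, one_apply]

end Matrix

theorem stmt9 {N m p : ℕ}
    (R : Matrix (Fin N × Fin m) (Fin N × Fin m) ℝ)
    (r : Fin N × Fin m → ℝ) (umax : Fin m → ℝ)
    (𝒢 : Matrix (Fin N × Fin p) (Fin N × Fin m) ℝ) :
    let G : Matrix ((Fin N × Fin m) ⊕ (Fin N × Fin m) ⊕ (Fin N × Fin p) ⊕ (Fin N × Fin p))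
        (Fin N × Fin m) ℝ :=
      Matrix.of fun i j => match i with
        | Sum.inl i => (1 : Matrix (Fin N × Fin m) (Fin N × Fin m) ℝ) i j
        | Sum.inr (Sum.inl i) => (-1 : Matrix (Fin N × Fin m) (Fin N × Fin m) ℝ) i j
        | Sum.inr (Sum.inr (Sum.inl i)) => 𝒢 i j
        | Sum.inr (Sum.inr (Sum.inr i)) => (-𝒢) i j
    let L : Matrix (Fin N) (Fin N) ℝ := 1 - (N : ℝ)⁻¹ • Matrix.of (fun _ _ => (1 : ℝ))
    let e₁ : Fin N × Fin m → ℝ := fun i => umax i.2 - r i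
    (∀ i j, (G * R) (Sum.inl i) j = R i j) ∧
    (L ⊗ₖ (1 : Matrix (Fin m) (Fin m) ℝ)).mulVec r =
      -((L ⊗ₖ (1 : Matrix (Fin m) (Fin m) ℝ)).mulVec e₁) := by
  intro G L e₁
  refine ⟨fun i j => ?_, ?_⟩
  · change ((1 : Matrix (Fin N × Fin m) (Fin N × Fin m) ℝ) * R) i j = R i j
    rw [one_mul]
  · have hL : L *ᵥ 1 = 0 := by
      simpa only [Fintype.card_fin] using centering_mulVec_one (ι := Fin N) (K := ℝ)
    have he₁ : e₁ = (fun i => umax i.2) - r := rfl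
    rw [he₁, mulVec_sub, kronecker_mulVec_eq_zero_of_mulVec_one_eq_zero hL, zero_sub, neg_neg]
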